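/- The grafting product on the vector space spanned by non-planar rooted trees, where τ₁ ↷ τ₂ is the sum over all ways of attaching an edge from a vertex of τ₂ to the root of τ₁, satisfies the left pre-Lie identity. -/

import Mathlib

/-- Rooted trees, presented with an (auxiliary) ordered list of subtrees. -/
inductive RTree : Type where
  | node : List RTree → RTree

mutual
/-- All ways of attaching an edge from a vertex of the second tree to the root of the
first tree (with multiplicity, one term per vertex of the second tree). -/
def RTree.graftT (s : RTree) : RTree → List RTree
  | .node l => RTree.node (s :: l) :: (RTree.graftF s l).map RTree.node
def RTree.graftF (s : RTree) : List RTree → List (List RTree)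
  | [] => []
  | t :: ts => ((RTree.graftT s t).map (· :: ts)) ++ ((RTree.graftF s ts).map (t :: ·))
end

/-- Equivalence of ordered trees up to reordering of subtrees everywhere, i.e. equality
as non-planar rooted trees (graph isomorphism fixing the root); approximated at
recursion depth `n`. -/
def treeEquivN : ℕ → RTree → RTree → Prop
  | 0, _, _ => False
  | n + 1, .node l₁, .node l₂ => ∃ l, List.Forall₂ (treeEquivN n) l₁ l ∧ l.Perm l₂

/-- Two ordered trees represent the same non-planar rooted tree. -/
def TreeEquiv (t₁ t₂ : RTree) : Prop := ∃ n, treeEquivN n t₁ t₂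

/-- The set 𝒯 of non-planar rooted trees. -/
def NPTree : Type := Quot TreeEquiv

/-- Grafting `τ₁ ↷ τ₂` of non-planar rooted trees, as an element of the free vector
space 𝒯 over the non-planar rooted trees. -/
noncomputable def graftNP {K : Type*} [Field K] (x y : NPTree) : NPTree →₀ K :=
  ((RTree.graftT (Quot.out x) (Quot.out y)).map
    (fun s => Finsupp.single (Quot.mk TreeEquiv s) (1 : K))).sum

/-- The bilinear extension of grafting to the free vector space 𝒯. -/
noncomputable def graftL {K : Type*} [Field K] (x y : NPTree →₀ K) : NPTree →₀ K :=
  x.sum fun t₁ c₁ => y.sum fun t₂ c₂ => (c₁ * c₂) • graftNP t₁ t₂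

/-! `x ↷ (y ↷ t)` either grafts `x` onto a vertex of `y`, which gives `(x ↷ y) ↷ t`, or grafts
`x` and `y` onto two independently chosen vertices of `t`. The second part is symmetric in `x`
and `y`, so the associator `(x ↷ y) ↷ t - x ↷ (y ↷ t)` is symmetric as well. All of this is an
identity of multisets of ordered trees up to `TreeEquiv`; it passes to the vector space spanned by
non-planar trees because grafting respects `TreeEquiv` in both arguments. -/

section Combinatorics

open Multiset

theorem List.Forall₂.rel_coe {α β : Type*} {r : α → β → Prop} {l₁ : List α} {l₂ : List β}
    (h : List.Forall₂ r l₁ l₂) : Multiset.Rel r l₁ l₂ := by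
  induction h with
  | nil => exact .zero
  | cons hab _ ih => exact .cons hab ih

theorem Multiset.rel_coe_iff {α β : Type*} {r : α → β → Prop} {l₁ : List α} {l₂ : List β} :
    Rel r l₁ l₂ ↔ ∃ l, List.Forall₂ r l₁ l ∧ l.Perm l₂ := by
  refine ⟨fun h => ?_, fun ⟨l, hl, hp⟩ => coe_eq_coe.mpr hp ▸ hl.rel_coe⟩
  induction l₁ generalizing l₂ with
  | nil => exact ⟨[], .nil, (coe_eq_zero _).mp (rel_zero_left.mp h) ▸ .nil⟩
  | cons a as ih =>
    rw [← cons_coe] at h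
    obtain ⟨b, bs, hab, hrel, hl₂⟩ := rel_cons_left.mp h
    induction bs using Quotient.inductionOn with | h m => ?_
    obtain ⟨l, hl, hp⟩ := ih hrel
    exact ⟨b :: l, .cons hab hl, (hp.cons b).trans (coe_eq_coe.mp hl₂.symm)⟩

theorem Multiset.rel_refl {α : Type*} {r : α → α → Prop} [Std.Refl r] (s : Multiset α) :
    Rel r s s :=
  rel_refl_of_refl_on fun a _ => Std.Refl.refl a

theorem Multiset.exists_rel_of_rel_exists {α β : Type*} {r : ℕ → α → β → Prop}
    (hr : ∀ {m n}, m ≤ n → ∀ {a b}, r m a b → r n a b) {s : Multiset α} {t : Multiset β}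
    (h : Rel (fun a b => ∃ n, r n a b) s t) : ∃ n, Rel (r n) s t := by
  induction h with
  | zero => exact ⟨0, .zero⟩
  | cons hab _ ih =>
    obtain ⟨m, hm⟩ := hab
    obtain ⟨n, hn⟩ := ih
    exact ⟨max m n, .cons (hr (le_max_left m n) hm)
      (hn.mono fun _ _ _ _ => hr (le_max_right m n))⟩

open RTree (node)

theorem treeEquivN_succ_node {n : ℕ} {l₁ l₂ : List RTree} :
    treeEquivN (n + 1) (node l₁) (node l₂) ↔ Rel (treeEquivN n) l₁ l₂ :=
  rel_coe_iff.symm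

theorem treeEquivN_succ_of_treeEquivN :
    ∀ {n : ℕ} {t₁ t₂ : RTree}, treeEquivN n t₁ t₂ → treeEquivN (n + 1) t₁ t₂
  | _ + 1, node _, node _, h =>
    treeEquivN_succ_node.mpr ((treeEquivN_succ_node.mp h).mono fun _ _ _ _ =>
      treeEquivN_succ_of_treeEquivN)

theorem treeEquivN_mono {m n : ℕ} (hmn : m ≤ n) {t₁ t₂ : RTree} (h : treeEquivN m t₁ t₂) :
    treeEquivN n t₁ t₂ :=
  monotone_nat_of_le_succ (f := fun n => treeEquivN n t₁ t₂)
    (fun _ => treeEquivN_succ_of_treeEquivN) hmn h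

theorem treeEquivN_symm : ∀ {n : ℕ} {t₁ t₂ : RTree}, treeEquivN n t₁ t₂ → treeEquivN n t₂ t₁
  | _ + 1, node _, node _, h =>
    treeEquivN_succ_node.mpr <| rel_flip.mp <|
      (treeEquivN_succ_node.mp h).mono fun _ _ _ _ => treeEquivN_symm

theorem treeEquivN_trans : ∀ {n : ℕ} {t₁ t₂ t₃ : RTree},
    treeEquivN n t₁ t₂ → treeEquivN n t₂ t₃ → treeEquivN n t₁ t₃
  | n + 1, node _, node _, node _, h₁₂, h₂₃ =>
    haveI : IsTrans RTree (treeEquivN n) := ⟨fun _ _ _ => treeEquivN_trans⟩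
    treeEquivN_succ_node.mpr <|
      (treeEquivN_succ_node.mp h₁₂).trans _ (treeEquivN_succ_node.mp h₂₃)

theorem treeEquiv_node {l₁ l₂ : List RTree} :
    TreeEquiv (node l₁) (node l₂) ↔ Rel TreeEquiv l₁ l₂ := by
  constructor
  · rintro ⟨_ | n, h⟩
    · exact h.elim
    · exact (treeEquivN_succ_node.mp h).mono fun _ _ _ _ h => ⟨n, h⟩
  · intro h
    obtain ⟨n, hn⟩ :=
      exists_rel_of_rel_exists (r := treeEquivN) (fun hmn _ _ => treeEquivN_mono hmn) h
    exact ⟨n + 1, treeEquivN_succ_node.mpr hn⟩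

theorem TreeEquiv.refl : ∀ t : RTree, TreeEquiv t t
  | node l => treeEquiv_node.mpr (List.forall₂_same.mpr fun t _ => TreeEquiv.refl t).rel_coe


theorem TreeEquiv.symm {t₁ t₂ : RTree} : TreeEquiv t₁ t₂ → TreeEquiv t₂ t₁
  | ⟨n, h⟩ => ⟨n, treeEquivN_symm h⟩

theorem TreeEquiv.trans {t₁ t₂ t₃ : RTree} : TreeEquiv t₁ t₂ → TreeEquiv t₂ t₃ → TreeEquiv t₁ t₃
  | ⟨m, h₁₂⟩, ⟨n, h₂₃⟩ =>
    ⟨max m n, treeEquivN_trans (treeEquivN_mono (le_max_left m n) h₁₂)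
      (treeEquivN_mono (le_max_right m n) h₂₃)⟩

theorem treeEquiv_equivalence : Equivalence TreeEquiv :=
  ⟨TreeEquiv.refl, TreeEquiv.symm, TreeEquiv.trans⟩

instance : Std.Refl TreeEquiv := ⟨TreeEquiv.refl⟩

instance : IsTrans RTree TreeEquiv := ⟨fun _ _ _ => TreeEquiv.trans⟩

def ForestEquiv (l₁ l₂ : List RTree) : Prop := Rel TreeEquiv l₁ l₂

namespace ForestEquiv

theorem refl (l : List RTree) : ForestEquiv l l :=
  rel_refl _

instance : Std.Refl ForestEquiv := ⟨refl⟩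

instance : IsTrans (List RTree) ForestEquiv := ⟨fun _ _ _ => Rel.trans _⟩

theorem cons {t t' : RTree} {l l' : List RTree} (ht : TreeEquiv t t') (hl : ForestEquiv l l') :
    ForestEquiv (t :: l) (t' :: l') :=
  Rel.cons ht hl

theorem of_perm {l l' : List RTree} (h : l.Perm l') : ForestEquiv l l' :=
  (coe_eq_coe.mpr h ▸ refl l : Rel TreeEquiv l l')

theorem rel_map_of_perm {α : Type*} (m : Multiset α) {f g : α → List RTree}
    (h : ∀ a, (f a).Perm (g a)) : Rel ForestEquiv (m.map f) (m.map g) :=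
  rel_map.mpr (rel_refl_of_refl_on fun a _ => of_perm (h a))

theorem node {l l' : List RTree} (h : ForestEquiv l l') : TreeEquiv (node l) (node l') :=
  treeEquiv_node.mpr h

end ForestEquiv

namespace RTree

def graft (s t : RTree) : Multiset RTree := graftT s t

def graftForest (s : RTree) (l : List RTree) : Multiset (List RTree) := graftF s l

theorem graft_node (s : RTree) (l : List RTree) :
    graft s (node l) = node (s :: l) ::ₘ (graftForest s l).map node := by
  simp [graft, graftForest, graftT]

@[simp]
theorem graftForest_nil (s : RTree) : graftForest s [] = 0 := rfl

theorem graftForest_cons (s t : RTree) (ts : List RTree) :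
    graftForest s (t :: ts) = (graft s t).map (· :: ts) + (graftForest s ts).map (t :: ·) := by
  simp [graft, graftForest, graftF]

theorem graftForest_perm (s : RTree) {l l' : List RTree} (h : l.Perm l') :
    Rel ForestEquiv (graftForest s l) (graftForest s l') := by
  induction h with
  | nil => exact .zero
  | cons t h ih =>
    simp only [graftForest_cons]
    exact .add (ForestEquiv.rel_map_of_perm _ fun _ => .cons _ h)
      (rel_map.mpr (ih.mono fun _ _ _ _ => .cons (.refl t)))
  | swap a b l =>
    simp only [graftForest_cons, map_add, map_map]
    rw [add_left_comm]
    exact .add (ForestEquiv.rel_map_of_perm _ fun _ => .swap _ _ _)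
      (.add (ForestEquiv.rel_map_of_perm _ fun _ => .swap _ _ _)
        (ForestEquiv.rel_map_of_perm _ fun _ => .swap _ _ _))
  | trans _ _ ih₁ ih₂ => exact ih₁.trans _ ih₂

mutual

theorem graft_congr {s s' : RTree} (hs : TreeEquiv s s') :
    ∀ {t t' : RTree}, TreeEquiv t t' → Rel TreeEquiv (graft s t) (graft s' t')
  | node l, node l', h => by
    obtain ⟨l'', hl, hp⟩ := rel_coe_iff.mp (treeEquiv_node.mp h)
    rw [graft_node, graft_node]
    refine .cons (ForestEquiv.node (.cons hs (treeEquiv_node.mp h))) (rel_map.mpr ?_)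
    exact ((graftForest_congr hs hl).trans _ (graftForest_perm s' hp)).mono
      fun _ _ _ _ => ForestEquiv.node

theorem graftForest_congr {s s' : RTree} (hs : TreeEquiv s s') :
    ∀ {l l' : List RTree}, List.Forall₂ TreeEquiv l l' →
      Rel ForestEquiv (graftForest s l) (graftForest s' l')
  | [], [], .nil => .zero
  | t :: ts, t' :: ts', .cons ht hts => by
    rw [graftForest_cons, graftForest_cons]
    exact .add (rel_map.mpr ((graft_congr hs ht).mono fun _ _ _ _ h => .cons h hts.rel_coe))
      (rel_map.mpr ((graftForest_congr hs hts).mono fun _ _ _ _ => .cons ht))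

end

mutual

/-- `graft₂ x y t`: graft `x` and `y` onto two vertices of `t`, chosen independently. -/
def graft₂ (x y : RTree) : RTree → Multiset RTree
  | node l => node (x :: y :: l) ::ₘ ((graftForest x l).map (fun f => node (y :: f))
      + (graftForest y l).map (fun f => node (x :: f)) + (graftForest₂ x y l).map node)

def graftForest₂ (x y : RTree) : List RTree → Multiset (List RTree)
  | [] => 0
  | t :: ts => (graft₂ x y t).map (· :: ts)
      + ((graft y t).bind fun u => (graftForest x ts).map (u :: ·))
      + ((graft x t).bind fun u => (graftForest y ts).map (u :: ·))
      + (graftForest₂ x y ts).map (t :: ·)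

end

mutual

theorem graft₂_comm (x y : RTree) :
    ∀ t, Rel TreeEquiv (graft₂ x y t) (graft₂ y x t)
  | node l => by
    rw [graft₂, graft₂, add_comm (map _ (graftForest x l))]
    exact .cons (ForestEquiv.of_perm (.swap y x l)).node
      (.add (rel_refl _)
        (rel_map.mpr ((graftForest₂_comm x y l).mono fun _ _ _ _ => ForestEquiv.node)))

theorem graftForest₂_comm (x y : RTree) :
    ∀ l, Rel ForestEquiv (graftForest₂ x y l) (graftForest₂ y x l)
  | [] => .zero
  | t :: ts => by
    rw [graftForest₂, graftForest₂, add_right_comm (map _ (graft₂ y x t))]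
    exact .add (.add (.add
      (rel_map.mpr ((graft₂_comm x y t).mono fun _ _ _ _ h => .cons h (.refl ts)))
      (rel_refl _)) (rel_refl _))
      (rel_map.mpr ((graftForest₂_comm x y ts).mono fun _ _ _ _ => .cons (.refl t)))

end

mutual

theorem bind_graft_graft (x y : RTree) :
    ∀ t, (graft y t).bind (graft x) = (graft x y).bind (graft · t) + graft₂ x y t
  | node l => by
    simp only [graft_node, graft₂, graftForest_cons, Multiset.cons_bind, Multiset.bind_map,
      Multiset.bind_cons, Multiset.map_add, Multiset.map_map, ← Multiset.map_bind,
      Function.comp_def, bind_graftForest_graftForest x y l]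
    simp only [← singleton_add]
    abel

theorem bind_graftForest_graftForest (x y : RTree) :
    ∀ l, (graftForest y l).bind (graftForest x)
      = (graft x y).bind (graftForest · l) + graftForest₂ x y l
  | [] => by simp [graftForest₂]
  | t :: ts => by
    simp only [graftForest_cons, graftForest₂, Multiset.add_bind, Multiset.bind_map,
      Multiset.bind_add, Multiset.map_add, ← Multiset.map_bind, bind_graft_graft x y t,
      bind_graftForest_graftForest x y ts, Multiset.bind_map_comm (graftForest y ts)]
    abel

end

theorem graft_preLie (x y t : RTree) :
    Rel TreeEquiv ((graft y t).bind (graft x) + (graft y x).bind (graft · t))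
      ((graft x t).bind (graft y) + (graft x y).bind (graft · t)) := by
  convert (graft₂_comm x y t).add
    (rel_refl ((graft x y).bind (graft · t) + (graft y x).bind (graft · t))) using 1 <;>
  · rw [bind_graft_graft]
    abel

end RTree

end Combinatorics

open RTree

namespace LinearMap

variable {R M : Type*} [CommSemiring R] [AddCommGroup M] [Module R M]

def associator (B : M →ₗ[R] M →ₗ[R] M) : M →ₗ[R] M →ₗ[R] M →ₗ[R] M :=
  B.compr₂ B - (llcomp R M M M).compl₁₂ B B

@[simp]
theorem associator_apply (B : M →ₗ[R] M →ₗ[R] M) (x y z : M) :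
    associator B x y z = B (B x y) z - B x (B y z) :=
  rfl

end LinearMap

section Linear

variable {K : Type*} [Field K]

def NPTree.mk (t : RTree) : NPTree := Quot.mk TreeEquiv t

theorem NPTree.mk_eq_mk {s t : RTree} (h : TreeEquiv s t) : NPTree.mk s = NPTree.mk t :=
  Quot.sound h

theorem NPTree.mk_surjective : Function.Surjective NPTree.mk :=
  Quot.mk_surjective

theorem NPTree.out_mk (t : RTree) : TreeEquiv (Quot.out (NPTree.mk t)) t :=
  treeEquiv_equivalence.eqvGen_iff.mp (Quot.eq.mp (Quot.out_eq _))

noncomputable def treeVec : Multiset RTree →+ (NPTree →₀ K) :=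
  Multiset.sumAddMonoidHom.comp (Multiset.mapAddMonoidHom fun t => Finsupp.single (NPTree.mk t) 1)

theorem treeVec_singleton (t : RTree) :
    treeVec ({t} : Multiset RTree) = Finsupp.single (NPTree.mk t) (1 : K) := by
  simp [treeVec]

theorem treeVec_congr {m m' : Multiset RTree} (h : Multiset.Rel TreeEquiv m m') :
    treeVec (K := K) m = treeVec m' := by
  have : m.map (fun t => Finsupp.single (NPTree.mk t) (1 : K))
      = m'.map (fun t => Finsupp.single (NPTree.mk t) (1 : K)) :=
    Multiset.rel_eq.mp (Multiset.rel_map.mpr (h.mono fun _ _ _ _ h => by rw [NPTree.mk_eq_mk h]))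
  simp only [treeVec, AddMonoidHom.comp_apply, Multiset.mapAddMonoidHom_apply, this]

theorem graftNP_mk (s t : RTree) :
    graftNP (K := K) (NPTree.mk s) (NPTree.mk t) = treeVec (graft s t) := by
  rw [← treeVec_congr (graft_congr (NPTree.out_mk s) (NPTree.out_mk t))]
  rfl

noncomputable def graftBilin : (NPTree →₀ K) →ₗ[K] (NPTree →₀ K) →ₗ[K] (NPTree →₀ K) :=
  Finsupp.lift _ K NPTree fun t₁ => Finsupp.lift _ K NPTree (graftNP t₁)

theorem graftBilin_apply (x y : NPTree →₀ K) : graftBilin x y = graftL x y := by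
  simp [graftBilin, graftL, Finsupp.lift_apply, LinearMap.finsupp_sum_apply, Finsupp.smul_sum,
    mul_smul]

theorem graftBilin_single_single (a b : NPTree) :
    graftBilin (Finsupp.single a 1) (Finsupp.single b 1) = graftNP (K := K) a b := by
  simp [graftBilin]

theorem graftBilin_treeVec (m₁ m₂ : Multiset RTree) :
    graftBilin (treeVec m₁) (treeVec m₂)
      = treeVec (K := K) (m₁.bind fun s => m₂.bind (graft s)) := by
  have graftBilin_singleton (s : RTree) :
      graftBilin (treeVec {s}) (treeVec m₂) = treeVec (K := K) (m₂.bind (graft s)) := by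
    induction m₂ using Multiset.induction_on with
    | empty => simp
    | cons t m₂ ih =>
      rw [← Multiset.singleton_add, map_add, map_add, ih, Multiset.add_bind,
        Multiset.singleton_bind, map_add, treeVec_singleton, treeVec_singleton,
        graftBilin_single_single, graftNP_mk]
  induction m₁ using Multiset.induction_on with
  | empty => simp
  | cons s m₁ ih =>
    rw [← Multiset.singleton_add, map_add, map_add, LinearMap.add_apply, ih, graftBilin_singleton,
      Multiset.add_bind, Multiset.singleton_bind, map_add]

theorem graftBilin_associator_flip :
    (graftBilin (K := K)).associator.flip = graftBilin.associator := by
  refine Finsupp.basisSingleOne.ext fun a => Finsupp.basisSingleOne.ext fun b =>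
    Finsupp.basisSingleOne.ext fun c => ?_
  obtain ⟨s, rfl⟩ := NPTree.mk_surjective a
  obtain ⟨t, rfl⟩ := NPTree.mk_surjective b
  obtain ⟨u, rfl⟩ := NPTree.mk_surjective c
  have h := treeVec_congr (K := K) (graft_preLie s t u)
  simp only [Finsupp.coe_basisSingleOne, LinearMap.flip_apply, LinearMap.associator_apply,
    ← treeVec_singleton, graftBilin_treeVec, Multiset.singleton_bind]
  rw [map_add, map_add] at h
  rw [sub_eq_sub_iff_add_eq_add, add_comm, h, add_comm]

end Linear

/-- The grafting product on the vector space spanned by non-planar rooted trees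
satisfies the left pre-Lie identity. -/
theorem grafting_preLie {K : Type*} [Field K] [CharZero K] :
    ∀ x y z : NPTree →₀ K,
      graftL x (graftL y z) - graftL (graftL x y) z
        - graftL y (graftL x z) + graftL (graftL y x) z = 0 := by
  intro x y z
  have h := congr($(graftBilin_associator_flip (K := K)) y x z)
  simp only [LinearMap.flip_apply, LinearMap.associator_apply, graftBilin_apply] at h
  rw [← sub_eq_zero] at h
  rw [← neg_eq_zero, ← h]
  abel
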